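/- Let n ≥ 4 and let a, b ∈ A_n be nonzero pure elements. Then the associator (a,a,b) = 0 if and only if both ‖a·b‖ = ‖a‖·‖b‖ and ‖a·(a·b)‖ = ‖a‖·‖a·b‖. -/

import Mathlib

noncomputable section

open scoped Quaternion

/-- The Cayley–Dickson algebra `A n = ℝ^(2^n)` as a type. -/
def CD : ℕ → Type
  | 0 => ℝ
  | n + 1 => CD n × CD n

namespace CD

instance instAddCommGroup : (n : ℕ) → AddCommGroup (CD n)
  | 0 => inferInstanceAs (AddCommGroup ℝ)
  | n + 1 =>
    letI := instAddCommGroup n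
    inferInstanceAs (AddCommGroup (CD n × CD n))

instance instModule : (n : ℕ) → Module ℝ (CD n)
  | 0 => inferInstanceAs (Module ℝ ℝ)
  | n + 1 =>
    letI := instModule n
    inferInstanceAs (Module ℝ (CD n × CD n))

/-- Conjugation in the Cayley–Dickson algebra. -/
def conj : {n : ℕ} → CD n → CD n
  | 0, x => x
  | _ + 1, x => (conj x.1, -x.2)

/-- Cayley–Dickson multiplication. -/
def mul : {n : ℕ} → CD n → CD n → CD n
  | 0, x, y => Mul.mul (α := ℝ) x y
  | _ + 1, x, y =>
    (mul x.1 y.1 - mul (conj y.2) x.2, mul y.2 x.1 + mul x.2 (conj y.1))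

instance instMul (n : ℕ) : Mul (CD n) := ⟨mul⟩

/-- The multiplicative unit `e₀`. -/
def one : {n : ℕ} → CD n
  | 0 => (1 : ℝ)
  | _ + 1 => (one, 0)

instance instOne (n : ℕ) : One (CD n) := ⟨one⟩

/-- The Euclidean inner product on `A n = ℝ^(2^n)`. -/
def inner : {n : ℕ} → CD n → CD n → ℝ
  | 0, x, y => (x * y : ℝ)
  | _ + 1, x, y => inner x.1 y.1 + inner x.2 y.2

/-- The Euclidean norm on `A n = ℝ^(2^n)`. -/
def norm {n : ℕ} (x : CD n) : ℝ := Real.sqrt (inner x x)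

/-- `ã = (-a₂, a₁)`. -/
def tilde {n : ℕ} (a : CD (n + 1)) : CD (n + 1) := (-a.2, a.1)

/-- `ẽ₀ = (0, e₀)`. -/
def etilde (n : ℕ) : CD (n + 1) := ((0 : CD n), (1 : CD n))

/-- An element is pure if its conjugate is its negative. -/
def IsPure {n : ℕ} (a : CD n) : Prop := conj a = -a

/-- An element of `A (n+1)` is doubly pure if both of its coordinates are pure. -/
def IsDoublyPure {n : ℕ} (a : CD (n + 1)) : Prop := IsPure a.1 ∧ IsPure a.2

/-- The associator `(a,b,c) = (ab)c - a(bc)`. -/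
def assoc {n : ℕ} (a b c : CD n) : CD n := a * b * c - a * (b * c)

/-- An element is alternative if `(a,a,x) = 0` for all `x`. -/
def IsAlternative {n : ℕ} (a : CD n) : Prop := ∀ x : CD n, assoc a a x = 0

/-- An element is strongly alternative if `(a,a,x) = 0` and `(a,x,x) = 0` for all `x`. -/
def IsStronglyAlternative {n : ℕ} (a : CD n) : Prop :=
  (∀ x : CD n, assoc a a x = 0) ∧ (∀ x : CD n, assoc a x x = 0)

/-- The pure (imaginary) part of an element. -/
def im {n : ℕ} (a : CD n) : CD n := (2⁻¹ : ℝ) • (a - conj a)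

/-- `H a`, the span of `{e₀, ã, a, ẽ₀}`. -/
def H {n : ℕ} (a : CD (n + 1)) : Submodule ℝ (CD (n + 1)) :=
  Submodule.span ℝ {(1 : CD (n + 1)), tilde a, a, etilde n}

/-- The orthogonal complement of `H a`. -/
def Hperp {n : ℕ} (a : CD (n + 1)) : Set (CD (n + 1)) :=
  {x | ∀ y ∈ H a, inner y x = 0}

end CD

/-! For pure `a` one has `a * a = -‖a‖²`, so `(a,a,b) = -(a(ab) + ‖a‖² b)`, and left
multiplication by `a` is skew-adjoint, so `⟪a(ab), b⟫ = -‖ab‖²`. Expanding `‖a(ab) + ‖a‖² b‖²`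
with these two facts gives `‖a(ab)‖² - 2‖a‖²‖ab‖² + ‖a‖⁴‖b‖²`, from which both directions follow. -/

open scoped RealInnerProductSpace

namespace CD

variable {n : ℕ}

section Components

variable (x y : CD (n + 1)) (r : ℝ)

@[simp] theorem fst_add : (x + y).1 = x.1 + y.1 := rfl
@[simp] theorem snd_add : (x + y).2 = x.2 + y.2 := rfl
@[simp] theorem fst_smul : (r • x).1 = r • x.1 := rfl
@[simp] theorem snd_smul : (r • x).2 = r • x.2 := rfl
@[simp] theorem fst_one : (1 : CD (n + 1)).1 = 1 := rfl
@[simp] theorem snd_one : (1 : CD (n + 1)).2 = 0 := rfl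
@[simp] theorem fst_conj : (conj x).1 = conj x.1 := rfl
@[simp] theorem snd_conj : (conj x).2 = -x.2 := rfl
@[simp] theorem fst_mul : (x * y).1 = x.1 * y.1 - conj y.2 * x.2 := rfl
@[simp] theorem snd_mul : (x * y).2 = y.2 * x.1 + x.2 * conj y.1 := rfl

theorem ext {x y : CD (n + 1)} (h₁ : x.1 = y.1) (h₂ : x.2 = y.2) : x = y := Prod.ext h₁ h₂

end Components

theorem conj_conj : ∀ {n} (x : CD n), conj (conj x) = x
  | 0, _ => rfl
  | _ + 1, x => ext (conj_conj x.1) (neg_neg x.2)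

theorem conj_add : ∀ {n} (x y : CD n), conj (x + y) = conj x + conj y
  | 0, _, _ => rfl
  | _ + 1, x, y => ext (conj_add x.1 y.1) (neg_add x.2 y.2)

theorem conj_smul : ∀ {n} (r : ℝ) (x : CD n), conj (r • x) = r • conj x
  | 0, _, _ => rfl
  | _ + 1, r, x => ext (conj_smul r x.1) (smul_neg r x.2).symm

def conjₗ : CD n →ₗ[ℝ] CD n where
  toFun := conj
  map_add' := conj_add
  map_smul' := conj_smul

theorem conj_neg (x : CD n) : conj (-x) = -conj x := map_neg conjₗ x

theorem conj_zero : conj (0 : CD n) = 0 := map_zero conjₗ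

theorem conj_one : ∀ {n}, conj (1 : CD n) = 1
  | 0 => rfl
  | _ + 1 => ext conj_one neg_zero

-- Distributivity on each side is proved jointly with the other: the doubling formula for the
-- product multiplies in both orders. The same holds for the other paired lemmas below.
theorem mul_add_and_add_mul (x y z : CD n) :
    x * (y + z) = x * y + x * z ∧ (x + y) * z = x * z + y * z := by
  induction n with
  | zero => exact ⟨_root_.mul_add (R := ℝ) x y z, _root_.add_mul (R := ℝ) x y z⟩
  | succ n ih =>
    refine ⟨ext ?_ ?_, ext ?_ ?_⟩ <;>
      simp only [fst_mul, snd_mul, fst_add, snd_add, conj_add, ih] <;>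
      abel

theorem smul_mul_and_mul_smul (r : ℝ) (x y : CD n) :
    r • x * y = r • (x * y) ∧ x * r • y = r • (x * y) := by
  induction n with
  | zero => exact ⟨_root_.mul_assoc (G := ℝ) r x y, mul_left_comm (G := ℝ) x r y⟩
  | succ n ih =>
    refine ⟨ext ?_ ?_, ext ?_ ?_⟩ <;>
      simp only [fst_mul, snd_mul, fst_smul, snd_smul, conj_smul, ih, smul_sub, smul_add]

-- Scoped: as global instances these would give `*`, `0`, … on `CD n` a second elaboration,
-- equal to the original one only up to unfolding.
scoped instance : NonUnitalNonAssocRing (CD n) :=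
  { instAddCommGroup n, instMul n with
    left_distrib x y z := (mul_add_and_add_mul x y z).1
    right_distrib x y z := (mul_add_and_add_mul x y z).2
    zero_mul x := by simpa using (smul_mul_and_mul_smul 0 0 x).1
    mul_zero x := by simpa using (smul_mul_and_mul_smul 0 x 0).2 }

theorem one_mul_and_mul_one (x : CD n) : 1 * x = x ∧ x * 1 = x := by
  induction n with
  | zero => exact ⟨_root_.one_mul (M := ℝ) x, _root_.mul_one (M := ℝ) x⟩
  | succ n ih =>
    refine ⟨ext ?_ ?_, ext ?_ ?_⟩ <;>
      simp only [fst_mul, snd_mul, fst_one, snd_one, conj_zero, conj_one, ih,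
        mul_zero, zero_mul, sub_zero, add_zero, zero_add]

scoped instance : NonAssocRing (CD n) :=
  { (inferInstance : NonUnitalNonAssocRing (CD n)), instOne n with
    one_mul x := (one_mul_and_mul_one x).1
    mul_one x := (one_mul_and_mul_one x).2 }

scoped instance : IsScalarTower ℝ (CD n) (CD n) := ⟨fun r x y => (smul_mul_and_mul_smul r x y).1⟩

scoped instance : SMulCommClass ℝ (CD n) (CD n) := ⟨fun r x y => (smul_mul_and_mul_smul r x y).2.symm⟩

protected theorem inner_comm (x y : CD n) : inner x y = inner y x := by
  induction n with
  | zero => exact mul_comm (G := ℝ) x y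
  | succ n ih => simp only [CD.inner, ih]

protected theorem inner_add_left (x y z : CD n) : inner (x + y) z = inner x z + inner y z := by
  induction n with
  | zero => exact _root_.add_mul (R := ℝ) x y z
  | succ n ih => simp only [CD.inner, fst_add, snd_add, ih]; ring

protected theorem inner_smul_left (r : ℝ) (x y : CD n) : inner (r • x) y = r * inner x y := by
  induction n with
  | zero => exact mul_assoc (G := ℝ) r x y
  | succ n ih => simp only [CD.inner, fst_smul, snd_smul, ih]; ring

protected theorem inner_self_nonneg (x : CD n) : 0 ≤ inner x x := by
  induction n with
  | zero => exact mul_self_nonneg (R := ℝ) x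
  | succ n ih => exact add_nonneg (ih x.1) (ih x.2)

protected theorem eq_zero_of_inner_self_eq_zero (x : CD n) (h : inner x x = 0) : x = 0 := by
  induction n with
  | zero => exact (mul_self_eq_zero (M₀ := ℝ)).mp h
  | succ n ih =>
    rw [CD.inner, add_eq_zero_iff_of_nonneg (CD.inner_self_nonneg _) (CD.inner_self_nonneg _)] at h
    exact ext (ih _ h.1) (ih _ h.2)

scoped instance : InnerProductSpace.Core ℝ (CD n) where
  inner := inner
  conj_inner_symm x y := CD.inner_comm y x
  re_inner_nonneg := CD.inner_self_nonneg
  add_left := CD.inner_add_left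
  smul_left x y r := CD.inner_smul_left r x y
  definite := CD.eq_zero_of_inner_self_eq_zero

scoped instance : NormedAddCommGroup (CD n) := InnerProductSpace.Core.toNormedAddCommGroup (𝕜 := ℝ)

scoped instance : InnerProductSpace ℝ (CD n) := InnerProductSpace.ofCore _

theorem norm_eq (x : CD n) : norm x = ‖x‖ := rfl

theorem inner_succ (x y : CD (n + 1)) : ⟪x, y⟫ = ⟪x.1, y.1⟫ + ⟪x.2, y.2⟫ := rfl

theorem inner_mul_eq_inner_conj_mul_and_inner_mul_conj (x y z : CD n) :
    ⟪x * y, z⟫ = ⟪y, conj x * z⟫ ∧ ⟪x * y, z⟫ = ⟪x, z * conj y⟫ := by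
  induction n with
  | zero =>
    exact ⟨(by intros; ring : ∀ a b c : ℝ, a * b * c = b * (a * c)) x y z,
      (by intros; ring : ∀ a b c : ℝ, a * b * c = a * (c * b)) x y z⟩
  | succ n ih =>
    have h₁ := ih x.1 y.1 z.1
    have h₂ := ih (conj y.2) x.2 z.1
    have h₃ := ih x.2 (conj z.1) y.2
    have h₄ := ih y.2 x.1 z.2
    have h₅ := ih x.2 (conj y.1) z.2
    have h₆ := ih (conj z.2) x.2 y.1
    simp only [conj_conj] at h₂ h₃ h₅ h₆
    simp only [inner_succ, fst_mul, snd_mul, fst_conj, snd_conj, inner_sub_left, inner_add_left,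
      inner_sub_right, inner_add_right, mul_neg, neg_mul, inner_neg_right, conj_neg, conj_conj]
    constructor <;>
      linarith [real_inner_comm y.1 (conj z.2 * x.2), real_inner_comm y.2 (x.2 * conj z.1)]

theorem mul_conj_and_conj_mul (x : CD n) : x * conj x = ⟪x, x⟫ • 1 ∧ conj x * x = ⟪x, x⟫ • 1 := by
  induction n with
  | zero => exact ⟨(mul_one (M := ℝ) _).symm, (mul_one (M := ℝ) _).symm⟩
  | succ n ih =>
    refine ⟨ext ?_ ?_, ext ?_ ?_⟩ <;>
      simp only [fst_mul, snd_mul, fst_conj, snd_conj, fst_smul, snd_smul, fst_one, snd_one,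
        conj_neg, conj_conj, neg_mul, mul_neg, ih, inner_succ, smul_zero,
        sub_neg_eq_add, neg_add_cancel, add_neg_cancel] <;>
      exact (add_smul _ _ _).symm

variable {a : CD n}

theorem mul_self_of_isPure (ha : IsPure a) : a * a = -(‖a‖ ^ 2 • 1) := by
  rw [← real_inner_self_eq_norm_sq, ← (mul_conj_and_conj_mul a).1, ha, mul_neg, neg_neg]

theorem assoc_self_of_isPure (ha : IsPure a) (b : CD n) :
    assoc a a b = -(a * (a * b) + ‖a‖ ^ 2 • b) := by
  rw [assoc, mul_self_of_isPure ha, neg_mul, smul_mul_assoc, one_mul]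
  abel

theorem inner_mul_mul_self_of_isPure (ha : IsPure a) (b : CD n) :
    ⟪a * (a * b), b⟫ = -‖a * b‖ ^ 2 := by
  rw [(inner_mul_eq_inner_conj_mul_and_inner_mul_conj a (a * b) b).1, ha, neg_mul,
    inner_neg_right, real_inner_self_eq_norm_sq]

end CD

theorem assoc_eq_zero_iff_normed_general (n : ℕ) (a b : CD n) (ha : CD.IsPure a) :
    CD.assoc a a b = 0 ↔
      CD.norm (a * b) = CD.norm a * CD.norm b ∧
      CD.norm (a * (a * b)) = CD.norm a * CD.norm (a * b) := by
  open scoped CD in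
  simp only [CD.norm_eq]
  have hab := CD.inner_mul_mul_self_of_isPure ha b
  rw [CD.assoc_self_of_isPure ha, neg_eq_zero]
  constructor
  · intro h
    have hc : a * (a * b) = -(‖a‖ ^ 2 • b) := eq_neg_of_add_eq_zero_left h
    have hnorm : ‖a * b‖ = ‖a‖ * ‖b‖ := by
      rw [hc, inner_neg_left, real_inner_smul_left, real_inner_self_eq_norm_sq] at hab
      rw [← pow_left_inj₀ (norm_nonneg _) (by positivity) two_ne_zero]
      linarith
    refine ⟨hnorm, ?_⟩
    rw [hc, norm_neg, norm_smul, Real.norm_of_nonneg (by positivity), hnorm]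
    ring
  · rintro ⟨h₁, h₂⟩
    rw [← norm_eq_zero, ← sq_eq_zero_iff, norm_add_sq_real, real_inner_smul_right, hab, norm_smul,
      Real.norm_of_nonneg (by positivity), h₂, h₁]
    ring

/-- For `n ≥ 4` and nonzero pure `a, b`, `(a,a,b) = 0` iff
`‖ab‖ = ‖a‖‖b‖` and `‖a(ab)‖ = ‖a‖‖ab‖`. -/
theorem assoc_eq_zero_iff_normed (n : ℕ) (hn : 4 ≤ n) (a b : CD n)
    (ha0 : a ≠ 0) (hb0 : b ≠ 0) (ha : CD.IsPure a) (hb : CD.IsPure b) :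
    CD.assoc a a b = 0 ↔
      CD.norm (a * b) = CD.norm a * CD.norm b ∧
      CD.norm (a * (a * b)) = CD.norm a * CD.norm (a * b) :=
  assoc_eq_zero_iff_normed_general n a b ha
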